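/- Let M_n^{(2)} = ∑_{i+j=n} M_i·M_j be the coefficients of the square of the Motzkin generating function, and let H_n denote its Hankel determinant det(M_{i+j}^{(2)})_{0≤i,j≤n-1}. Then H_n = 1 if n mod 12 ∈ {0,1,2,3}, H_n = 0 if n mod 12 ∈ {4,5,10,11}, and H_n = -1 if n mod 12 ∈ {6,7,8,9}. -/

import Mathlib

/-!
The Hankel matrix of `M⁽²⁾` factors through the Motzkin triangle `T n k` (Motzkin paths of
length `n` ending at height `k`). Its rows evolve by the symmetric tridiagonal all-ones matrix
`J`, `T (n + 1) = J T n`, so `∑ k, T a k * T b k = M (a + b)`; together with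
`M⁽²⁾ n = M (n + 2) - M (n + 1)` this writes the Hankel matrix as `T K Tᵀ` with `K = J² - J`
and `T` unitriangular, so `H n = det K_n`. Truncation only disturbs the last diagonal entry:
`K_{n+1} = J_{n+1} (J_{n+1} - 1) + E_{n,n}`, hence
`det K_{n+1} = det K_n + det J_{n+1} * det (J_{n+1} - 1)`. The tridiagonal determinants satisfy
`det J_{n+3} = -det J_n` and `det (J_{n+2} - 1) = -det (J_n - 1)`, so the increments change
sign under `n ↦ n + 6`, `det K_n` has period 12, and its first twelve values give the pattern.
-/

open PowerSeries

noncomputable def motzkin (n : ℕ) : ℚ :=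
  ∑ k ∈ Finset.range (n + 1), (n.choose (2 * k) : ℚ) * (catalan k : ℚ)

noncomputable def motzkinPS : PowerSeries ℚ := PowerSeries.mk motzkin

noncomputable def motzkinConv (r n : ℕ) : ℚ := PowerSeries.coeff (R := ℚ) n (motzkinPS ^ r)

noncomputable def hankel (a : ℕ → ℚ) (n : ℕ) : ℚ :=
  (Matrix.of fun i j : Fin n => a ((i : ℕ) + (j : ℕ))).det

noncomputable def H (r n : ℕ) : ℚ := hankel (motzkinConv r) n

noncomputable def motzkinSq (n : ℕ) : ℚ :=
  ∑ i ∈ Finset.range (n + 1), motzkin i * motzkin (n - i)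

open Finset
open scoped Matrix

theorem Nat.sum_range_choose_mul_choose_sub (m p q : ℕ) :
    ∑ i ∈ range (m + 1), i.choose p * (m - i).choose q = (m + 1).choose (p + q + 1) := by
  induction m generalizing q with
  | zero => cases p <;> cases q <;> simp [Nat.choose_eq_zero_of_lt]
  | succ m ih =>
    rw [sum_range_succ]
    cases q with
    | zero =>
      have := ih 0
      simp only [Nat.choose_zero_right, mul_one, add_zero] at this ⊢
      rw [this, Nat.choose_succ_succ' (m + 1), add_comm]
    | succ q =>
      have pascal : ∀ i ∈ range (m + 1), i.choose p * (m + 1 - i).choose (q + 1) =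
          i.choose p * (m - i).choose q + i.choose p * (m - i).choose (q + 1) := by
        intro i hi
        rw [Nat.sub_add_comm (Nat.lt_succ_iff.mp (mem_range.mp hi)), Nat.choose_succ_succ', mul_add]
      rw [sum_congr rfl pascal, sum_add_distrib, ih, ih, Nat.sub_self, Nat.choose_zero_succ,
        mul_zero, add_zero, show p + (q + 1) + 1 = p + q + 1 + 1 by ring,
        ← Nat.choose_succ_succ' (m + 1)]

def corner {R : Type*} (f : ℕ → ℕ → R) (n : ℕ) : Matrix (Fin n) (Fin n) R :=
  Matrix.of fun i j => f i j

lemma corner_submatrix_castSucc {R : Type*} (f : ℕ → ℕ → R) (n : ℕ) :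
    (corner f (n + 1)).submatrix Fin.castSucc Fin.castSucc = corner f n := rfl

section det

variable {R : Type*} [CommRing R] {n : ℕ}

def leadingMinor (f : ℕ → ℕ → R) (n : ℕ) : R := (corner f n).det

lemma leadingMinor_zero (f : ℕ → ℕ → R) : leadingMinor f 0 = 1 := Matrix.det_fin_zero

lemma leadingMinor_one (f : ℕ → ℕ → R) : leadingMinor f 1 = f 0 0 := Matrix.det_fin_one _

lemma det_succ_of_last_row_eq_zero (M : Matrix (Fin (n + 1)) (Fin (n + 1)) R)
    (h : ∀ j : Fin n, M (Fin.last n) j.castSucc = 0) :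
    M.det = M (Fin.last n) (Fin.last n) * (M.submatrix Fin.castSucc Fin.castSucc).det := by
  rw [Matrix.det_succ_row M (Fin.last n), Fin.sum_univ_castSucc]
  simp [h, Fin.succAbove_last, ← two_mul, pow_mul]

lemma det_succ_of_last_col_eq_zero (M : Matrix (Fin (n + 1)) (Fin (n + 1)) R)
    (h : ∀ i : Fin n, M i.castSucc (Fin.last n) = 0) :
    M.det = M (Fin.last n) (Fin.last n) * (M.submatrix Fin.castSucc Fin.castSucc).det := by
  rw [← Matrix.det_transpose, det_succ_of_last_row_eq_zero Mᵀ h, ← Matrix.transpose_submatrix,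
    Matrix.det_transpose, Matrix.transpose_apply]

lemma det_add_single_last (M : Matrix (Fin (n + 1)) (Fin (n + 1)) R) (c : R) :
    (M + Matrix.single (Fin.last n) (Fin.last n) c).det =
      M.det + c * (M.submatrix Fin.castSucc Fin.castSucc).det := by
  have hrow : M + Matrix.single (Fin.last n) (Fin.last n) c =
      M.updateRow (Fin.last n) (M (Fin.last n) + Pi.single (Fin.last n) c) := by
    ext i j
    rcases eq_or_ne i (Fin.last n) with rfl | hi
    · simp [Matrix.single_apply, Pi.single_apply, eq_comm]
    · simp [hi, hi.symm]
  rw [hrow, Matrix.det_updateRow_add, Matrix.updateRow_eq_self,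
    det_succ_of_last_row_eq_zero (M.updateRow _ _) fun j => by
      simp [(Fin.castSucc_lt_last j).ne]]
  have hminor : (M.updateRow (Fin.last n) (Pi.single (Fin.last n) c)).submatrix Fin.castSucc
      Fin.castSucc = M.submatrix Fin.castSucc Fin.castSucc := by
    ext i j
    simp [(Fin.castSucc_lt_last i).ne]
  simp [hminor]

lemma leadingMinor_add_two_of_tridiagonal (f : ℕ → ℕ → R)
    (hf : ∀ k l, k + 2 ≤ l → f k l = 0 ∧ f l k = 0) (n : ℕ) :
    leadingMinor f (n + 2) =
      f (n + 1) (n + 1) * leadingMinor f (n + 1) -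
        f (n + 1) n * f n (n + 1) * leadingMinor f n := by
  rw [leadingMinor, Matrix.det_succ_row _ (Fin.last (n + 1)), Fin.sum_univ_castSucc,
    Fin.sum_univ_castSucc, sum_eq_zero fun j _ => by simp [corner, (hf j (n + 1) (by omega)).2]]
  have hminor : ((corner f (n + 2)).submatrix (Fin.last (n + 1)).succAbove
      (Fin.last n).castSucc.succAbove).det = f n (n + 1) * (corner f n).det := by
    rw [det_succ_of_last_col_eq_zero _ fun i => by simp [corner, (hf i (n + 1) (by omega)).1]]
    have hsub : ((corner f (n + 2)).submatrix (Fin.last (n + 1)).succAbove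
        (Fin.last n).castSucc.succAbove).submatrix Fin.castSucc Fin.castSucc = corner f n := by
      ext i j
      simp [corner, Fin.succAbove_last, Fin.succAbove_castSucc_of_lt _ _ (Fin.castSucc_lt_last j)]
    rw [hsub]
    simp [corner, Fin.succAbove_last]
  rw [hminor, Fin.succAbove_last, corner_submatrix_castSucc]
  simp [corner, leadingMinor]
  ring

end det

def tridiag {R : Type*} [Zero R] [One R] (a : R) (k l : ℕ) : R :=
  if k = l then a else if k ≤ l + 1 ∧ l ≤ k + 1 then 1 else 0

section tridiag

variable {R : Type*} [Zero R] [One R]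

lemma tridiag_comm (a : R) (k l : ℕ) : tridiag a k l = tridiag a l k := by
  simp only [tridiag, eq_comm (a := k), and_comm]

lemma tridiag_self (a : R) (k : ℕ) : tridiag a k k = a := if_pos rfl

lemma tridiag_of_succ_eq {a : R} {k l : ℕ} (h : k + 1 = l ∨ l + 1 = k) : tridiag a k l = 1 := by
  rw [tridiag, if_neg (by omega), if_pos (by omega)]

lemma tridiag_eq_zero {a : R} {k l : ℕ} (h : k + 2 ≤ l ∨ l + 2 ≤ k) :
    tridiag a k l = 0 := by
  rw [tridiag, if_neg (by omega), if_neg (by omega)]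

end tridiag

section tridiagMinor

variable {R : Type*} [CommRing R]

lemma leadingMinor_tridiag_one (a : R) : leadingMinor (tridiag a) 1 = a := by
  rw [leadingMinor_one, tridiag_self]

lemma leadingMinor_tridiag_add_two (a : R) (n : ℕ) :
    leadingMinor (tridiag a) (n + 2) =
      a * leadingMinor (tridiag a) (n + 1) - leadingMinor (tridiag a) n := by
  rw [leadingMinor_add_two_of_tridiagonal _ (fun k l h => ⟨tridiag_eq_zero (by omega),
    tridiag_eq_zero (by omega)⟩), tridiag_self, tridiag_of_succ_eq (by omega),
    tridiag_of_succ_eq (by omega), one_mul, one_mul]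

end tridiagMinor

lemma motzkin_eq_sum_range {m N : ℕ} (h : m < N) :
    motzkin m = ∑ k ∈ range N, (m.choose (2 * k) : ℚ) * catalan k :=
  (eventually_constant_sum (fun k hk => by rw [Nat.choose_eq_zero_of_lt (by omega)]; simp)
    (by omega)).symm

lemma motzkin_add_two_sub_motzkin_add_one (n : ℕ) :
    motzkin (n + 2) - motzkin (n + 1) =
      ∑ s ∈ range (n + 1), ((n + 1).choose (2 * s + 1) : ℚ) * catalan (s + 1) := by
  have pascal : ∀ s, ((n + 2).choose (2 * (s + 1)) : ℚ) - (n + 1).choose (2 * (s + 1)) =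
      (n + 1).choose (2 * s + 1) := fun s => by
    rw [show 2 * (s + 1) = 2 * s + 1 + 1 by ring, Nat.choose_succ_succ' (n + 1)]; push_cast; ring
  rw [motzkin_eq_sum_range (N := n + 3) (by omega), motzkin_eq_sum_range (N := n + 3) (by omega),
    ← sum_sub_distrib, sum_range_succ', sum_range_succ]
  simp only [← sub_mul, pascal, Nat.choose_eq_zero_of_lt (show n + 1 < 2 * (n + 1) + 1 by omega)]
  simp

lemma motzkinSq_eq_sum (n : ℕ) :
    motzkinSq n =
      ∑ s ∈ range (n + 1), ((n + 1).choose (2 * s + 1) : ℚ) * catalan (s + 1) := by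
  have expand : ∀ i ∈ range (n + 1), motzkin i * motzkin (n - i) =
      ∑ a ∈ range (n + 1), ∑ b ∈ range (n + 1),
        (catalan a * catalan b : ℚ) *
          ((i.choose (2 * a) * (n - i).choose (2 * b) : ℕ) : ℚ) := by
    intro i hi
    rw [motzkin_eq_sum_range (N := n + 1) (by simpa using hi),
      motzkin_eq_sum_range (N := n + 1) (by omega), sum_mul_sum]
    refine sum_congr rfl fun a _ => sum_congr rfl fun b _ => ?_
    push_cast; ring
  have vanish : ∀ a ∈ range (n + 1), ∀ b, n + 1 - a ≤ b →
      (catalan a * catalan b : ℚ) * ((n + 1).choose (2 * a + 2 * b + 1) : ℚ) = 0 := by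
    intro a _ b hb
    rw [Nat.choose_eq_zero_of_lt (by omega)]; simp
  calc motzkinSq n
      = ∑ a ∈ range (n + 1), ∑ b ∈ range (n + 1),
          (catalan a * catalan b : ℚ) * ((n + 1).choose (2 * a + 2 * b + 1) : ℚ) := by
        rw [motzkinSq, sum_congr rfl expand, sum_comm]
        refine sum_congr rfl fun a _ => ?_
        rw [sum_comm]
        simp_rw [← mul_sum, ← Nat.cast_sum, Nat.sum_range_choose_mul_choose_sub]
    _ = ∑ a ∈ range (n + 1), ∑ b ∈ range (n + 1 - a),
          (catalan a * catalan b : ℚ) * ((n + 1).choose (2 * a + 2 * b + 1) : ℚ) :=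
        sum_congr rfl fun a ha => eventually_constant_sum (vanish a ha) (by omega)
    _ = _ := by
        rw [← sum_range_diag_flip]
        refine sum_congr rfl fun s hs => ?_
        rw [catalan_succ', Nat.sum_antidiagonal_eq_sum_range_succ_mk]
        push_cast
        rw [mul_comm, sum_mul]
        refine sum_congr rfl fun a ha => ?_
        rw [show 2 * a + 2 * (s - a) + 1 = 2 * s + 1 by simp at ha; omega]

lemma motzkinSq_eq_sub (n : ℕ) : motzkinSq n = motzkin (n + 2) - motzkin (n + 1) := by
  rw [motzkinSq_eq_sum, motzkin_add_two_sub_motzkin_add_one]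

/-- Paths with `j + k` up and `j` down steps that never go below zero (reflection principle). -/
def ballot (j k : ℕ) : ℚ := (2 * j + k).choose j - (2 * j + k).choose (j + k + 1)

lemma ballot_zero_left (k : ℕ) : ballot 0 k = 1 := by
  simp [ballot]

lemma ballot_zero_right (j : ℕ) : ballot j 0 = catalan j := by
  have hcat : ((j + 1) * catalan j : ℚ) = (2 * j).choose j := by
    exact_mod_cast (Nat.centralBinom_eq_two_mul_choose j ▸ succ_mul_catalan_eq_centralBinom j)
  have hsucc : ((2 * j).choose (j + 1) * (j + 1) : ℚ) = (2 * j).choose j * j := by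
    have := Nat.choose_succ_right_eq (2 * j) j
    rw [show 2 * j - j = j by omega] at this
    exact_mod_cast this
  apply mul_left_cancel₀ (by positivity : (j + 1 : ℚ) ≠ 0)
  rw [ballot, add_zero]
  linear_combination -hsucc - hcat

lemma ballot_succ_succ (j k : ℕ) :
    ballot (j + 1) (k + 1) = ballot (j + 1) k + ballot j (k + 2) := by
  rw [ballot, ballot, ballot, show 2 * (j + 1) + (k + 1) = (2 * j + k + 2) + 1 by ring,
    show 2 * (j + 1) + k = 2 * j + k + 2 by ring, show 2 * j + (k + 2) = 2 * j + k + 2 by ring,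
    show j + 1 + (k + 1) + 1 = (j + k + 2) + 1 by ring, show j + 1 + k + 1 = j + k + 2 by ring,
    show j + (k + 2) + 1 = j + k + 2 + 1 by ring, Nat.choose_succ_succ' _ j,
    Nat.choose_succ_succ' _ (j + k + 2)]
  push_cast; ring

lemma ballot_succ_zero (j : ℕ) : ballot (j + 1) 0 = ballot j 1 := by
  rw [ballot, ballot, show 2 * (j + 1) + 0 = (2 * j + 1) + 1 by ring,
    show j + 1 + 0 + 1 = (j + 1) + 1 by ring, Nat.choose_succ_succ' _ j,
    Nat.choose_succ_succ' _ (j + 1)]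
  push_cast; ring

/-- `motzkinTriangle n k` counts Motzkin paths of length `n` ending at height `k`: choose the
`k + 2 * j` non-flat steps, then arrange them as a ballot path. -/
def motzkinTriangle (n k : ℕ) : ℚ :=
  ∑ j ∈ range (n + 1), (n.choose (k + 2 * j) : ℚ) * ballot j k

lemma motzkinTriangle_eq_sum_range {n N : ℕ} (k : ℕ) (h : n < N) :
    motzkinTriangle n k = ∑ j ∈ range N, (n.choose (k + 2 * j) : ℚ) * ballot j k :=
  (eventually_constant_sum (fun j hj => by rw [Nat.choose_eq_zero_of_lt (by omega)]; simp)
    (by omega)).symm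

lemma motzkinTriangle_eq_zero_of_lt {n k : ℕ} (h : n < k) : motzkinTriangle n k = 0 :=
  sum_eq_zero fun j _ => by rw [Nat.choose_eq_zero_of_lt (by omega)]; simp

lemma motzkinTriangle_self (n : ℕ) : motzkinTriangle n n = 1 := by
  rw [motzkinTriangle, sum_range_succ', sum_eq_zero fun j _ => by
    rw [Nat.choose_eq_zero_of_lt (by omega), Nat.cast_zero, zero_mul]]
  simp [ballot_zero_left]

lemma motzkinTriangle_zero_left (k : ℕ) : motzkinTriangle 0 k = if k = 0 then 1 else 0 := by
  rcases Nat.eq_zero_or_pos k with rfl | hk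
  · exact motzkinTriangle_self 0
  · rw [motzkinTriangle_eq_zero_of_lt hk, if_neg hk.ne']

lemma motzkinTriangle_zero_right (n : ℕ) : motzkinTriangle n 0 = motzkin n := by
  simp only [motzkinTriangle, motzkin, zero_add, ballot_zero_right]

lemma motzkinTriangle_succ_zero (n : ℕ) :
    motzkinTriangle (n + 1) 0 = motzkinTriangle n 0 + motzkinTriangle n 1 := by
  rw [motzkinTriangle_eq_sum_range 0 (N := n + 2) (by omega),
    motzkinTriangle_eq_sum_range 0 (N := n + 2) (by omega),
    motzkinTriangle_eq_sum_range 1 (N := n + 1) (by omega), sum_range_succ',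
    sum_range_succ' _ (n + 1)]
  simp only [show ∀ j, 0 + 2 * (j + 1) = (1 + 2 * j) + 1 by intro j; ring, Nat.choose_succ_succ',
    ballot_succ_zero, Nat.cast_add, add_mul, sum_add_distrib, ballot_zero_left, mul_zero, zero_add,
    Nat.choose_zero_right]
  ring

lemma motzkinTriangle_succ_succ (n k : ℕ) : motzkinTriangle (n + 1) (k + 1) =
    motzkinTriangle n k + motzkinTriangle n (k + 1) + motzkinTriangle n (k + 2) := by
  have hpascal : ∀ j, ((n + 1).choose (k + 1 + 2 * j) : ℚ) * ballot j (k + 1) =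
      n.choose (k + 2 * j) * ballot j (k + 1) + n.choose (k + 1 + 2 * j) * ballot j (k + 1) := by
    intro j
    rw [show k + 1 + 2 * j = (k + 2 * j) + 1 by ring, Nat.choose_succ_succ']; push_cast; ring
  have hballot : ∑ j ∈ range (n + 2), (n.choose (k + 2 * j) : ℚ) * ballot j (k + 1) =
      motzkinTriangle n k + motzkinTriangle n (k + 2) := by
    rw [motzkinTriangle_eq_sum_range k (N := n + 2) (by omega), motzkinTriangle,
      sum_range_succ', sum_range_succ' _ (n + 1)]
    simp only [ballot_succ_succ, ballot_zero_left, mul_add (R := ℚ), sum_add_distrib,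
      show ∀ j, k + 2 * (j + 1) = k + 2 + 2 * j by intro j; ring]
    ring
  rw [motzkinTriangle_eq_sum_range (k + 1) (N := n + 2) (by omega),
    sum_congr rfl fun j _ => hpascal j, sum_add_distrib, hballot,
    ← motzkinTriangle_eq_sum_range (k + 1) (by omega), add_right_comm]

lemma motzkinTriangle_succ_eq_sum {n N : ℕ} (k : ℕ) (h : n < N ∨ k + 2 ≤ N) :
    motzkinTriangle (n + 1) k = ∑ l ∈ range N, tridiag (1 : ℚ) k l * motzkinTriangle n l := by
  have hvanish : ∀ l ≥ min (k + 2) (n + 1),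
      tridiag (1 : ℚ) k l * motzkinTriangle n l = 0 := by
    intro l hl
    rcases min_le_iff.mp hl with hl | hl
    · rw [tridiag_eq_zero (by omega), zero_mul]
    · rw [motzkinTriangle_eq_zero_of_lt (by omega), mul_zero]
  rw [eventually_constant_sum hvanish (by omega),
    ← eventually_constant_sum hvanish (n := k + 2) (by omega)]
  rcases k with _ | k
  · simp [sum_range_succ, tridiag_self, tridiag_of_succ_eq, motzkinTriangle_succ_zero]
  · rw [sum_range_succ, sum_range_succ, sum_range_succ, sum_eq_zero fun l hl => by
      rw [tridiag_eq_zero (by simp at hl; omega), zero_mul]]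
    simp [tridiag_self, tridiag_of_succ_eq, motzkinTriangle_succ_succ, add_assoc]

lemma sum_range_motzkinTriangle_mul {a N : ℕ} (b : ℕ) (h : a < N) :
    ∑ k ∈ range N, motzkinTriangle a k * motzkinTriangle b k = motzkin (a + b) := by
  suffices key : ∀ a b N, a + b < N →
      ∑ k ∈ range N, motzkinTriangle a k * motzkinTriangle b k = motzkin (a + b) by
    have hvanish : ∀ k ≥ a + 1, motzkinTriangle a k * motzkinTriangle b k = 0 := fun k hk => by
      rw [motzkinTriangle_eq_zero_of_lt hk, zero_mul]
    rw [eventually_constant_sum hvanish h,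
      ← eventually_constant_sum hvanish (n := a + b + 1) (by omega), key a b _ (by omega)]
  intro a
  induction a with
  | zero =>
    intro b N h
    simp [motzkinTriangle_zero_left, motzkinTriangle_zero_right, show 0 < N by omega]
  | succ a ih =>
    intro b N h
    calc ∑ k ∈ range N, motzkinTriangle (a + 1) k * motzkinTriangle b k
        = ∑ l ∈ range N, motzkinTriangle a l *
            ∑ k ∈ range N, tridiag (1 : ℚ) l k * motzkinTriangle b k := by
          simp_rw [motzkinTriangle_succ_eq_sum _ (Or.inl (show a < N by omega)), sum_mul, mul_sum]
          rw [sum_comm]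
          exact sum_congr rfl fun l _ => sum_congr rfl fun k _ => by rw [tridiag_comm]; ring
      _ = motzkin (a + 1 + b) := by
          simp_rw [← motzkinTriangle_succ_eq_sum _ (Or.inl (show b < N by omega))]
          rw [ih (b + 1) N (by omega)]
          congr 1; omega

/-- The entries of `J² - J` for the infinite matrix `J = tridiag 1`; the sum is the full matrix
product because `tridiag 1 k m = 0` for `m ≥ k + 2`. -/
def tridiagSqSub (k l : ℕ) : ℚ :=
  ∑ m ∈ range (k + 2), tridiag (1 : ℚ) k m * tridiag 1 m l - tridiag 1 k l

lemma sum_range_tridiagSqSub_mul {j N : ℕ} (k : ℕ) (h : j < N) :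
    ∑ l ∈ range N, tridiagSqSub k l * motzkinTriangle j l =
      motzkinTriangle (j + 2) k - motzkinTriangle (j + 1) k := by
  simp only [tridiagSqSub, sub_mul, sum_sub_distrib, sum_mul]
  rw [sum_comm]
  simp_rw [mul_assoc, ← mul_sum, ← motzkinTriangle_succ_eq_sum _ (Or.inl h)]
  rw [← motzkinTriangle_succ_eq_sum _ (Or.inr le_rfl)]

lemma hankel_motzkinSq_eq_mul (n : ℕ) :
    (Matrix.of fun i j : Fin n => motzkinSq (i + j)) =
      corner motzkinTriangle n * corner tridiagSqSub n * (corner motzkinTriangle n)ᵀ := by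
  ext i j
  have inner : ∀ k : ℕ, ∑ l : Fin n, tridiagSqSub k l * motzkinTriangle j l =
      motzkinTriangle (j + 2) k - motzkinTriangle (j + 1) k := fun k => by
    rw [Fin.sum_univ_eq_sum_range (fun l => tridiagSqSub k l * motzkinTriangle j l)]
    exact sum_range_tridiagSqSub_mul k j.isLt
  simp only [Matrix.mul_apply, Matrix.transpose_apply, corner, Matrix.of_apply, sum_mul]
  rw [sum_comm]
  simp only [mul_assoc, ← mul_sum, inner, mul_sub, sum_sub_distrib]
  rw [Fin.sum_univ_eq_sum_range (fun k => motzkinTriangle i k * motzkinTriangle (j + 2) k),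
    Fin.sum_univ_eq_sum_range (fun k => motzkinTriangle i k * motzkinTriangle (j + 1) k),
    sum_range_motzkinTriangle_mul _ i.isLt, sum_range_motzkinTriangle_mul _ i.isLt,
    motzkinSq_eq_sub, add_assoc, add_assoc]

lemma leadingMinor_motzkinTriangle (n : ℕ) : leadingMinor motzkinTriangle n = 1 := by
  rw [leadingMinor, Matrix.det_of_isLowerTriangular (corner motzkinTriangle n)
    fun i j (hij : i < j) => motzkinTriangle_eq_zero_of_lt hij]
  exact prod_eq_one fun i _ => motzkinTriangle_self i

lemma hankel_motzkinSq_eq_leadingMinor (n : ℕ) :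
    hankel motzkinSq n = leadingMinor tridiagSqSub n := by
  have hT := leadingMinor_motzkinTriangle n
  rw [leadingMinor] at hT
  rw [hankel, hankel_motzkinSq_eq_mul, Matrix.det_mul, Matrix.det_mul, Matrix.det_transpose, hT,
    one_mul, mul_one, leadingMinor]

lemma corner_tridiag_one_sub_one (n : ℕ) :
    corner (tridiag (1 : ℚ)) n - 1 = corner (tridiag 0) n := by
  ext i j
  rcases eq_or_ne i j with rfl | hij
  · simp [corner, tridiag_self]
  · have : (i : ℕ) ≠ j := Fin.val_ne_of_ne hij
    simp [corner, tridiag, hij, this]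

lemma corner_tridiagSqSub_succ (n : ℕ) : corner tridiagSqSub (n + 1) =
    corner (tridiag 1) (n + 1) * corner (tridiag 0) (n + 1) +
      Matrix.single (Fin.last n) (Fin.last n) 1 := by
  rw [← corner_tridiag_one_sub_one, mul_sub, mul_one]
  ext k l
  have hvanish : ∀ m ≥ (k : ℕ) + 2, tridiag (1 : ℚ) k m * tridiag 1 m l = 0 := fun m hm => by
    rw [tridiag_eq_zero (by omega), zero_mul]
  simp only [corner, tridiagSqSub, Matrix.add_apply, Matrix.sub_apply, Matrix.mul_apply,
    Matrix.of_apply, Matrix.single_apply, Fin.sum_univ_eq_sum_range (fun m =>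
      tridiag (1 : ℚ) k m * tridiag 1 m l) (n + 1)]
  rcases (Fin.le_last k).lt_or_eq with hk | rfl
  · rw [eventually_constant_sum hvanish (n := n + 1) (by simp [Fin.lt_def] at hk; omega),
      if_neg (by rintro ⟨rfl, -⟩; exact hk.ne rfl)]
    ring
  · rw [Fin.val_last, sum_range_succ, tridiag_of_succ_eq (by omega)]
    rcases (Fin.le_last l).lt_or_eq with hl | rfl
    · rw [tridiag_eq_zero (by simp [Fin.lt_def] at hl; omega),
        if_neg (by rintro ⟨-, rfl⟩; exact hl.ne rfl)]
      ring
    · rw [Fin.val_last, tridiag_of_succ_eq (by omega), if_pos ⟨rfl, rfl⟩]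
      ring

lemma leadingMinor_tridiagSqSub_succ (n : ℕ) : leadingMinor tridiagSqSub (n + 1) =
    leadingMinor (tridiag 1) (n + 1) * leadingMinor (tridiag 0) (n + 1) +
      leadingMinor tridiagSqSub n := by
  have hminor : (corner (tridiag (1 : ℚ)) (n + 1) * corner (tridiag 0) (n + 1)).submatrix
      Fin.castSucc Fin.castSucc = corner tridiagSqSub n := by
    rw [← corner_submatrix_castSucc tridiagSqSub, corner_tridiagSqSub_succ]
    ext i j
    simp [(Fin.castSucc_lt_last i).ne']
  rw [leadingMinor, corner_tridiagSqSub_succ, det_add_single_last, Matrix.det_mul, hminor, one_mul]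
  rfl

lemma leadingMinor_tridiag_one_add_three (n : ℕ) :
    leadingMinor (tridiag (1 : ℚ)) (n + 3) = -leadingMinor (tridiag 1) n := by
  rw [leadingMinor_tridiag_add_two, leadingMinor_tridiag_add_two]
  ring

lemma leadingMinor_tridiag_zero_add_two (n : ℕ) :
    leadingMinor (tridiag (0 : ℚ)) (n + 2) = -leadingMinor (tridiag 0) n := by
  rw [leadingMinor_tridiag_add_two, zero_mul, zero_sub]

lemma periodic_leadingMinor_tridiagSqSub : Function.Periodic (leadingMinor tridiagSqSub) 12 := by
  have hsix : ∀ m, leadingMinor tridiagSqSub (m + 6) = leadingMinor tridiagSqSub m +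
      ∑ i ∈ range 6, leadingMinor (tridiag 1) (m + i + 1) * leadingMinor (tridiag 0) (m + i + 1) :=
    fun m => by simp only [sum_range_succ, sum_range_zero, leadingMinor_tridiagSqSub_succ]; ring
  intro n
  have hshift : ∀ i ∈ range 6,
      leadingMinor (tridiag (1 : ℚ)) (n + 6 + i + 1) * leadingMinor (tridiag 0) (n + 6 + i + 1) =
      -(leadingMinor (tridiag 1) (n + i + 1) * leadingMinor (tridiag 0) (n + i + 1)) := by
    intro i _
    simp only [show n + 6 + i + 1 = n + i + 1 + 3 + 3 by ring, leadingMinor_tridiag_one_add_three,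
      show n + i + 1 + 3 + 3 = n + i + 1 + 2 + 2 + 2 by ring, leadingMinor_tridiag_zero_add_two]
    ring
  rw [show n + 12 = n + 6 + 6 from rfl, hsix, hsix, sum_congr rfl hshift, sum_neg_distrib]
  ring

theorem motzkinSq_hankel (n : ℕ) :
    ((n % 12 = 0 ∨ n % 12 = 1 ∨ n % 12 = 2 ∨ n % 12 = 3) → hankel motzkinSq n = 1) ∧
    ((n % 12 = 4 ∨ n % 12 = 5 ∨ n % 12 = 10 ∨ n % 12 = 11) → hankel motzkinSq n = 0) ∧
    ((n % 12 = 6 ∨ n % 12 = 7 ∨ n % 12 = 8 ∨ n % 12 = 9) → hankel motzkinSq n = -1) := by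
  have hmod : hankel motzkinSq n = leadingMinor tridiagSqSub (n % 12) := by
    rw [hankel_motzkinSq_eq_leadingMinor, periodic_leadingMinor_tridiagSqSub.map_mod_nat]
  refine ⟨?_, ?_, ?_⟩ <;> rintro (h | h | h | h) <;> rw [hmod, h] <;>
    norm_num [leadingMinor_tridiagSqSub_succ, leadingMinor_tridiag_one_add_three,
      leadingMinor_tridiag_zero_add_two, leadingMinor_tridiag_add_two, leadingMinor_zero,
      leadingMinor_tridiag_one]
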